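/- arXiv:0905.3255 — 8 statements merged into one kernel-verified Lean document; each statement's English description precedes it below -/
import Mathlib

section
/- Let F, G ∈ k[x,y,z] be homogeneous of degrees d and δ respectively. Define R(F,G)(x,y,z) as the resultant with respect to the homogeneous variables (λ,μ) of the two forms F((μ-λ)x, (μ-λ)y, μz) and G(λx, λy, μz). Then R(F,G) is either zero or a homogeneous polynomial of degree 2dδ in x, y, z. -/
open MvPolynomial

/-- The Sylvester matrix of two univariate polynomials `f`, `g`, regarded as
forms of (declared) degrees `d` and `e` respectively.  Its first `e` rows carry
the shifted coefficient sequence `f.coeff d, …, f.coeff 0`, and the remaining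
`d` rows the sequence `g.coeff e, …, g.coeff 0`. -/
noncomputable def sylvester {R : Type*} [CommRing R] (d e : ℕ)
    (f g : Polynomial R) : Matrix (Fin (e + d)) (Fin (e + d)) R :=
  Matrix.of fun i j =>
    if (i : ℕ) < e then
      (if (i : ℕ) ≤ (j : ℕ) ∧ (j : ℕ) ≤ (i : ℕ) + d then f.coeff (d + i - j) else 0)
    else
      (if (i : ℕ) - e ≤ (j : ℕ) ∧ (j : ℕ) ≤ ((i : ℕ) - e) + e then
        g.coeff (e + ((i : ℕ) - e) - j) else 0)

/-- The resultant of `f` and `g` regarded as forms of degrees `d` and `e`. -/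
noncomputable def resultantD {R : Type*} [CommRing R] (d e : ℕ)
    (f g : Polynomial R) : R :=
  (sylvester d e f g).det

/-- `F((μ-λ)x, (μ-λ)y, μz)` as a binary form in `(λ,μ)`, dehomogenized at
`μ = 1`: the polynomial `F((1-λ)x, (1-λ)y, z)` in the variable `λ` with
coefficients in `k[x,y,z]`. -/
noncomputable def conchSubB {k : Type*} [CommRing k] (F : MvPolynomial (Fin 3) k) :
    Polynomial (MvPolynomial (Fin 3) k) :=
  MvPolynomial.aeval
    ![(1 - Polynomial.X) * Polynomial.C (X 0),
      (1 - Polynomial.X) * Polynomial.C (X 1),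
      Polynomial.C (X 2)] F

/-- `G(λx, λy, μz)` dehomogenized at `μ = 1`: the polynomial `G(λx, λy, z)`
in the variable `λ` with coefficients in `k[x,y,z]`. -/
noncomputable def conchSubC {k : Type*} [CommRing k] (G : MvPolynomial (Fin 3) k) :
    Polynomial (MvPolynomial (Fin 3) k) :=
  MvPolynomial.aeval
    ![Polynomial.X * Polynomial.C (X 0),
      Polynomial.X * Polynomial.C (X 1),
      Polynomial.C (X 2)] G

/-- The conchoidal resultant `R(F,G)`: the resultant, with respect to the
homogeneous variables `(λ,μ)`, of `F((μ-λ)x,(μ-λ)y,μz)` (a form of degree `d`)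
and `G(λx,λy,μz)` (a form of degree `e`). -/
noncomputable def conchRes {k : Type*} [CommRing k] (d e : ℕ)
    (F G : MvPolynomial (Fin 3) k) : MvPolynomial (Fin 3) k :=
  resultantD d e (conchSubB F) (conchSubC G)

/-!
Substituting linear forms in `x, y, z` with coefficients in `k[λ]` into a form of degree `d`
yields a polynomial in `λ` each of whose coefficients is a form of degree `d` in `x, y, z`.
So the first `δ` rows of the Sylvester matrix consist of forms of degree `d` and the last `d`
rows of forms of degree `δ`; every term of the Leibniz expansion of its determinant is then a
form of degree `δd + dδ`.
-/

namespace Polynomial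

variable {ι R S : Type*} [CommSemiring R] [Semiring S] [Algebra R S]

def coeffGrading (A : ι → Submodule R S) (i : ι) : Submodule R S[X] where
  carrier := {p | ∀ n, p.coeff n ∈ A i}
  add_mem' hp hq n := by simpa only [coeff_add] using add_mem (hp n) (hq n)
  zero_mem' n := by simpa only [coeff_zero] using zero_mem (A i)
  smul_mem' r p hp n := by simpa only [coeff_smul] using (A i).smul_mem r (hp n)

variable {A : ι → Submodule R S}

instance coeffGrading.gradedMonoid [AddMonoid ι] [SetLike.GradedMonoid A] :
    SetLike.GradedMonoid (coeffGrading A) where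
  one_mem n := by
    rw [coeff_one]
    split_ifs
    · exact SetLike.one_mem_graded A
    · exact zero_mem _
  mul_mem i j p q hp hq n := by
    rw [coeff_mul]
    exact sum_mem fun x _ => SetLike.mul_mem_graded (hp x.1) (hq x.2)

theorem C_mem_coeffGrading {i : ι} {s : S} (hs : s ∈ A i) : C s ∈ coeffGrading A i := by
  intro n
  rw [coeff_C]
  split_ifs
  · exact hs
  · exact zero_mem _

theorem X_mem_coeffGrading [Zero ι] [SetLike.GradedOne A] : X ∈ coeffGrading A 0 := by
  intro n
  rw [coeff_X]
  split_ifs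
  · exact SetLike.one_mem_graded A
  · exact zero_mem _

end Polynomial

theorem MvPolynomial.IsHomogeneous.aeval_mem_graded {σ ι R S : Type*} [CommSemiring R]
    [CommSemiring S] [Algebra R S] [AddCommMonoid ι] (A : ι → Submodule R S)
    [SetLike.GradedMonoid A] {φ : MvPolynomial σ R} {m : ℕ} (hφ : φ.IsHomogeneous m)
    {g : σ → S} {i : ι} (hg : ∀ s, g s ∈ A i) :
    MvPolynomial.aeval g φ ∈ A (m • i) := by
  rw [φ.as_sum, map_sum]
  refine sum_mem fun u hu => ?_
  have hu : ∑ s ∈ u.support, u s = m := by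
    simpa [Finsupp.weight_apply, Finsupp.sum] using hφ (mem_support_iff.mp hu)
  rw [aeval_monomial, ← Algebra.smul_def, ← hu, Finset.sum_smul]
  exact (A _).smul_mem _ (SetLike.prod_pow_mem_graded A _ _ _ fun s _ => hg s)

theorem Matrix.det_mem_graded {ι R S n : Type*} [CommRing R] [SetLike S R]
    [AddSubgroupClass S R] [AddCommMonoid ι] (A : ι → S) [SetLike.GradedMonoid A]
    [Fintype n] [DecidableEq n] {M : Matrix n n R} {w : n → ι}
    (hM : ∀ i j, M i j ∈ A (w i)) : M.det ∈ A (∑ i, w i) := by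
  rw [det_apply]
  refine sum_mem fun σ _ => ?_
  rw [Units.smul_def, ← Equiv.sum_comp σ w]
  exact zsmul_mem (SetLike.prod_mem_graded A _ _ fun i _ => hM (σ i) i) _

section Sylvester

variable {ι R S : Type*} [CommRing R] [SetLike S R] {A : ι → S} {d e : ℕ} {f g : Polynomial R}
  {a b : ι}

theorem sylvester_mem_graded [ZeroMemClass S R] (hf : ∀ n, f.coeff n ∈ A a)
    (hg : ∀ n, g.coeff n ∈ A b) (i j : Fin (e + d)) :
    sylvester d e f g i j ∈ A (if (i : ℕ) < e then a else b) := by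
  simp only [sylvester, Matrix.of_apply]
  split_ifs <;> first | exact hf _ | exact hg _ | exact zero_mem _

theorem resultantD_mem_graded [AddSubgroupClass S R] [AddCommMonoid ι] [SetLike.GradedMonoid A]
    (hf : ∀ n, f.coeff n ∈ A a) (hg : ∀ n, g.coeff n ∈ A b) :
    resultantD d e f g ∈ A (e • a + d • b) := by
  have hw : ∑ i : Fin (e + d), (if (i : ℕ) < e then a else b) = e • a + d • b := by
    simp [Fin.sum_univ_add]
  rw [← hw]
  exact Matrix.det_mem_graded A (sylvester_mem_graded hf hg)

end Sylvester

section Conchoid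

variable {k : Type*} [CommRing k]

open Polynomial

theorem coeff_conchSubB_isHomogeneous {F : MvPolynomial (Fin 3) k} {d : ℕ}
    (hF : F.IsHomogeneous d) (n : ℕ) : ((conchSubB F).coeff n).IsHomogeneous d := by
  have hB : conchSubB F ∈ coeffGrading (homogeneousSubmodule (Fin 3) k) (d • (0 + 1)) := by
    have hline : (1 - Polynomial.X : (MvPolynomial (Fin 3) k)[X]) ∈
        coeffGrading (homogeneousSubmodule (Fin 3) k) 0 :=
      sub_mem (SetLike.one_mem_graded _) X_mem_coeffGrading
    unfold conchSubB
    refine hF.aeval_mem_graded _ fun s => ?_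
    fin_cases s
    · exact SetLike.mul_mem_graded hline (C_mem_coeffGrading (isHomogeneous_X k 0))
    · exact SetLike.mul_mem_graded hline (C_mem_coeffGrading (isHomogeneous_X k 1))
    · simpa using C_mem_coeffGrading (isHomogeneous_X k 2)
  simpa using hB n

theorem coeff_conchSubC_isHomogeneous {G : MvPolynomial (Fin 3) k} {e : ℕ}
    (hG : G.IsHomogeneous e) (n : ℕ) : ((conchSubC G).coeff n).IsHomogeneous e := by
  have hC : conchSubC G ∈ coeffGrading (homogeneousSubmodule (Fin 3) k) (e • (0 + 1)) := by
    unfold conchSubC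
    refine hG.aeval_mem_graded _ fun s => ?_
    fin_cases s
    · exact SetLike.mul_mem_graded X_mem_coeffGrading (C_mem_coeffGrading (isHomogeneous_X k 0))
    · exact SetLike.mul_mem_graded X_mem_coeffGrading (C_mem_coeffGrading (isHomogeneous_X k 1))
    · simpa using C_mem_coeffGrading (isHomogeneous_X k 2)
  simpa using hC n

end Conchoid

/-- the conchoidal resultant of forms of degrees `d` and `δ` is
either zero or homogeneous of degree `2dδ`. -/
theorem conchRes_isHomogeneous {k : Type*} [Field k] (d δ : ℕ)
    (F G : MvPolynomial (Fin 3) k)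
    (hF : F.IsHomogeneous d) (hG : G.IsHomogeneous δ) :
    conchRes d δ F G = 0 ∨ (conchRes d δ F G).IsHomogeneous (2 * d * δ) := by
  have h := resultantD_mem_graded (A := homogeneousSubmodule (Fin 3) k) (d := d) (e := δ)
    (coeff_conchSubB_isHomogeneous hF) (coeff_conchSubC_isHomogeneous hG)
  have hdeg : δ • d + d • δ = 2 * d * δ := by
    simp only [smul_eq_mul]
    ring
  exact .inr (hdeg ▸ h)
end

section
/- Let F, G ∈ k[x,y,z] be homogeneous of degrees d and δ. Let R(F,G) be the resultant with respect to (λ,μ) of F((μ-λ)x,(μ-λ)y,μz) and G(λx,λy,μz), and similarly let R(G,F) be the resultant of G((μ-λ)x,(μ-λ)y,μz) and F(λx,λy,μz). Then R(F,G) = c·R(G,F) for some nonzero constant c ∈ k (in particular the two polynomials define the same divisor). -/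
open MvPolynomial

/-!
Dehomogenized at `μ = 1`, the substitution `λ ↦ μ - λ` is composition with `q = 1 - X`, which is
an involution and exchanges the two substituted forms: `conchSubB F = conchSubC F ∘ q` and
`conchSubC F = conchSubB F ∘ q`. So `R(G,F)` is the resultant of `g ∘ q` and `f ∘ q`, where `R(F,G)`
is that of `f` and `g`. The Sylvester matrix is the matrix of `(p, p') ↦ f p' + g p` on polynomials
of bounded degree, and composition with `q` conjugates this map for `(f, g)` into the one for
`(f ∘ q, g ∘ q)`. Composition with `q` being an involution, its determinants square to `1`; with the
sign from swapping the arguments this gives `R(G,F) = v R(F,G)` with `v² = 1`, so `v = ±1` in the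
domain `k[x,y,z]`.
-/

open Polynomial Matrix

namespace Matrix

theorem det_submatrix_equiv {m n R : Type*} [Fintype m] [DecidableEq m] [Fintype n]
    [DecidableEq n] [CommRing R] (σ τ : m ≃ n) (A : Matrix n n R) :
    (A.submatrix σ τ).det = Equiv.Perm.sign (σ.trans τ.symm) * A.det := by
  rw [← det_submatrix_equiv_self τ A, ← det_permute]
  congr 1
  ext i j
  simp

end Matrix

section Sylvester

variable {R : Type*} [CommRing R]

def sylvesterRowEquiv (d e : ℕ) : Fin (e + d) ≃ Fin (d + e) :=
  finSumFinEquiv.symm.trans <| (Equiv.sumCongr Fin.revPerm Fin.revPerm).trans <|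
    (Equiv.sumComm _ _).trans finSumFinEquiv

def sylvesterColEquiv (d e : ℕ) : Fin (e + d) ≃ Fin (d + e) :=
  Fin.revPerm.trans (finCongr (add_comm e d))

/- `sylvester` lists the coefficients in decreasing order along rows, `f` first; Mathlib's
`Polynomial.sylvester` lists them in increasing order down columns, `g` first. -/
theorem sylvester_eq_submatrix_transpose (d e : ℕ) (f g : R[X]) :
    sylvester d e f g =
      (f.sylvester g d e)ᵀ.submatrix (sylvesterRowEquiv d e) (sylvesterColEquiv d e) := by
  ext i j
  induction i using Fin.addCases <;>
  · simp only [_root_.sylvester, Polynomial.sylvester, sylvesterRowEquiv, sylvesterColEquiv,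
      of_apply, submatrix_apply, transpose_apply, Equiv.trans_apply, Equiv.sumComm_apply,
      Equiv.sumCongr_apply, finSumFinEquiv_symm_apply_castAdd, finSumFinEquiv_symm_apply_natAdd,
      Sum.map_inl, Sum.map_inr, Sum.swap_inl, Sum.swap_inr, finSumFinEquiv_apply_left,
      finSumFinEquiv_apply_right, Fin.addCases_left, Fin.addCases_right, Fin.revPerm_apply,
      finCongr_apply, Fin.val_cast, Fin.val_rev, Fin.val_castAdd, Fin.val_natAdd,
      Set.mem_Icc]
    split_ifs <;> (try congr 1) <;> omega

theorem exists_resultantD_eq_sign_mul_resultant (d e : ℕ) (f g : R[X]) :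
    ∃ s : ℤˣ, resultantD d e f g = s * f.resultant g d e := by
  refine ⟨Equiv.Perm.sign ((sylvesterRowEquiv d e).trans (sylvesterColEquiv d e).symm), ?_⟩
  rw [resultantD, sylvester_eq_submatrix_transpose, Matrix.det_submatrix_equiv,
    Matrix.det_transpose, Polynomial.resultant]

end Sylvester

namespace Polynomial

variable {R : Type*} [CommRing R]

theorem natDegree_comp_le_of_natDegree_le_one {p q : R[X]} (hq : q.natDegree ≤ 1) :
    (p.comp q).natDegree ≤ p.natDegree :=
  natDegree_comp_le.trans ((Nat.mul_le_mul_left _ hq).trans_eq (mul_one _))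

theorem comp_mem_degreeLT {p q : R[X]} {k : ℕ} (hq : q.natDegree ≤ 1) (hp : p ∈ degreeLT R k) :
    p.comp q ∈ degreeLT R k := by
  rw [mem_degreeLT] at hp ⊢
  obtain rfl | hp0 := eq_or_ne p 0
  · simp
  rw [degree_eq_natDegree hp0, Nat.cast_lt] at hp
  exact degree_le_natDegree.trans_lt
    (Nat.cast_lt.mpr ((natDegree_comp_le_of_natDegree_le_one hq).trans_lt hp))

theorem natDegree_one_sub_X_le : (1 - X : R[X]).natDegree ≤ 1 :=
  (natDegree_sub_le _ _).trans (by simpa using natDegree_X_le)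

theorem one_sub_X_comp_one_sub_X : (1 - X : R[X]).comp (1 - X) = X := by
  simp

noncomputable def compDegreeLT (q : R[X]) (hq : q.natDegree ≤ 1) (k : ℕ) :
    degreeLT R k →ₗ[R] degreeLT R k :=
  (aeval q).toLinearMap.restrict fun p hp => by
    simpa only [AlgHom.toLinearMap_apply, ← comp_eq_aeval] using comp_mem_degreeLT hq hp

@[simp]
theorem coe_compDegreeLT_apply (q : R[X]) (hq : q.natDegree ≤ 1) (k : ℕ) (p : degreeLT R k) :
    (compDegreeLT q hq k p : R[X]) = (p : R[X]).comp q := by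
  simp [compDegreeLT, comp_eq_aeval]

theorem compDegreeLT_comp_self {q : R[X]} (hq : q.natDegree ≤ 1) (hqq : q.comp q = X) (k : ℕ) :
    compDegreeLT q hq k ∘ₗ compDegreeLT q hq k = LinearMap.id := by
  ext p : 2
  simp [comp_assoc, hqq]

variable {m n : ℕ} {f g q : R[X]}

theorem sylvesterMap_comp_prodMap_compDegreeLT (hq : q.natDegree ≤ 1)
    (hf : f.natDegree ≤ m) (hg : g.natDegree ≤ n) :
    sylvesterMap (f.comp q) (g.comp q) ((natDegree_comp_le_of_natDegree_le_one hq).trans hf)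
        ((natDegree_comp_le_of_natDegree_le_one hq).trans hg) ∘ₗ
        (compDegreeLT q hq m).prodMap (compDegreeLT q hq n) =
      compDegreeLT q hq (m + n) ∘ₗ sylvesterMap f g hf hg := by
  refine LinearMap.ext fun pp => Subtype.ext ?_
  simp [add_comp, mul_comp]

theorem resultant_comp_mul_det (hq : q.natDegree ≤ 1) (hf : f.natDegree ≤ m)
    (hg : g.natDegree ≤ n) :
    (f.comp q).resultant (g.comp q) m n *
        LinearMap.det ((compDegreeLT q hq m).prodMap (compDegreeLT q hq n)) =
      LinearMap.det (compDegreeLT q hq (m + n)) * f.resultant g m n := by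
  let b₁ := ((degreeLT.basis R m).prod (degreeLT.basis R n)).reindex finSumFinEquiv
  let b₂ := degreeLT.basis R (m + n)
  have := congrArg (fun φ => (LinearMap.toMatrix b₁ b₂ φ).det)
    (sylvesterMap_comp_prodMap_compDegreeLT hq hf hg)
  simp only [LinearMap.toMatrix_comp b₁ b₁ b₂, LinearMap.toMatrix_comp b₁ b₂ b₂, det_mul,
    LinearMap.det_toMatrix] at this
  rwa [resultant, resultant, ← toMatrix_sylvesterMap' f g hf hg,
    ← toMatrix_sylvesterMap' (f.comp q) (g.comp q)]

theorem exists_resultant_comp_eq_mul (hq : q.natDegree ≤ 1) (hqq : q.comp q = X)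
    (hf : f.natDegree ≤ m) (hg : g.natDegree ≤ n) :
    ∃ u : R, u * u = 1 ∧ (f.comp q).resultant (g.comp q) m n = u * f.resultant g m n := by
  set D := LinearMap.det ((compDegreeLT q hq m).prodMap (compDegreeLT q hq n))
  set D' := LinearMap.det (compDegreeLT q hq (m + n))
  have hD : D * D = 1 := by
    rw [← LinearMap.det_comp, LinearMap.prodMap_comp, compDegreeLT_comp_self hq hqq,
      compDegreeLT_comp_self hq hqq, LinearMap.prodMap_id, LinearMap.det_id]
  have hD' : D' * D' = 1 := by
    rw [← LinearMap.det_comp, compDegreeLT_comp_self hq hqq, LinearMap.det_id]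
  refine ⟨D' * D, by rw [mul_mul_mul_comm, hD', hD, one_mul], ?_⟩
  calc (f.comp q).resultant (g.comp q) m n
      = (f.comp q).resultant (g.comp q) m n * D * D := by rw [mul_assoc, hD, mul_one]
    _ = D' * D * f.resultant g m n := by rw [resultant_comp_mul_det hq hf hg]; ring

end Polynomial

theorem exists_resultantD_comp_swap_eq_mul {R : Type*} [CommRing R] {d e : ℕ} {f g q : R[X]}
    (hq : q.natDegree ≤ 1) (hqq : q.comp q = Polynomial.X) (hf : f.natDegree ≤ d)
    (hg : g.natDegree ≤ e) :
    ∃ v : R, v * v = 1 ∧ resultantD e d (g.comp q) (f.comp q) = v * resultantD d e f g := by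
  have sign_mul_self (s : ℤˣ) : ((s : ℤ) : R) * (s : ℤ) = 1 := by
    rw [← Int.cast_mul, ← Units.val_mul, Int.units_mul_self, Units.val_one, Int.cast_one]
  obtain ⟨s, hs⟩ := exists_resultantD_eq_sign_mul_resultant e d (g.comp q) (f.comp q)
  obtain ⟨s', hs'⟩ := exists_resultantD_eq_sign_mul_resultant d e f g
  obtain ⟨u, hu, hres⟩ := exists_resultant_comp_eq_mul hq hqq hf hg
  refine ⟨s * (-1) ^ (e * d) * u * s', ?_, ?_⟩
  · calc s * (-1) ^ (e * d) * u * s' * (s * (-1) ^ (e * d) * u * s')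
        = (s * s) * ((-1) ^ (e * d) * (-1) ^ (e * d)) * (u * u) * (s' * s') := by ring
      _ = 1 := by rw [sign_mul_self, sign_mul_self, hu, ← mul_pow, neg_one_mul, neg_neg]; simp
  · rw [hs, resultant_comm, hres, hs']
    linear_combination (s * (-1) ^ (e * d) * u * f.resultant g d e) * (sign_mul_self s').symm

namespace MvPolynomial

variable {σ R S : Type*} [CommSemiring R] [CommSemiring S] [Algebra R S]

theorem natDegree_aeval_le_of_isHomogeneous {F : MvPolynomial σ R} {n : ℕ}
    (hF : F.IsHomogeneous n) (v : σ → S[X]) (hv : ∀ i, (v i).natDegree ≤ 1) :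
    (aeval v F).natDegree ≤ n := by
  rw [F.as_sum, map_sum]
  refine Polynomial.natDegree_sum_le_of_forall_le _ _ fun s hs => ?_
  rw [aeval_monomial, Polynomial.algebraMap_apply]
  refine (Polynomial.natDegree_C_mul_le _ _).trans ?_
  calc (s.prod fun i k => v i ^ k).natDegree
      ≤ ∑ i ∈ s.support, (v i ^ s i).natDegree := Polynomial.natDegree_prod_le _ _
    _ ≤ ∑ i ∈ s.support, s i := Finset.sum_le_sum fun i _ =>
        Polynomial.natDegree_pow_le_of_le _ (hv i) |>.trans_eq (mul_one _)
    _ = n := by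
        rw [← hF (mem_support_iff.mp hs), Finsupp.weight_apply]
        simp [Finsupp.sum]

theorem aeval_comp (v : σ → S[X]) (F : MvPolynomial σ R) (q : S[X]) :
    (aeval v F).comp q = aeval (fun i => (v i).comp q) F := by
  induction F using MvPolynomial.induction_on with
  | C a => simp
  | add p p' hp hp' => simp [Polynomial.add_comp, hp, hp']
  | mul_X p i hp => simp [Polynomial.mul_comp, hp]

end MvPolynomial

section Conchoid

variable {k : Type*} [CommRing k]

theorem conchSubB_eq_comp (F : MvPolynomial (Fin 3) k) :
    conchSubB F = (conchSubC F).comp (1 - Polynomial.X) := by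
  rw [conchSubB, conchSubC, MvPolynomial.aeval_comp]
  congr 2
  funext i
  fin_cases i <;> simp [Polynomial.mul_comp, -Polynomial.X_mul_C]

theorem conchSubC_eq_comp (F : MvPolynomial (Fin 3) k) :
    conchSubC F = (conchSubB F).comp (1 - Polynomial.X) := by
  rw [conchSubB_eq_comp, Polynomial.comp_assoc, Polynomial.one_sub_X_comp_one_sub_X,
    Polynomial.comp_X]

theorem natDegree_conchSubC_le {n : ℕ} {F : MvPolynomial (Fin 3) k} (hF : F.IsHomogeneous n) :
    (conchSubC F).natDegree ≤ n :=
  MvPolynomial.natDegree_aeval_le_of_isHomogeneous hF _ fun i => by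
    fin_cases i <;> simp [(Polynomial.natDegree_C_mul_le _ _).trans Polynomial.natDegree_X_le]

theorem natDegree_conchSubB_le {n : ℕ} {F : MvPolynomial (Fin 3) k} (hF : F.IsHomogeneous n) :
    (conchSubB F).natDegree ≤ n := by
  rw [conchSubB_eq_comp]
  exact (Polynomial.natDegree_comp_le_of_natDegree_le_one Polynomial.natDegree_one_sub_X_le).trans
    (natDegree_conchSubC_le hF)

end Conchoid

/-- symmetry of the conchoidal resultant: `R(F,G) = c·R(G,F)` for
some nonzero constant `c ∈ k`. -/
theorem conchRes_symm {k : Type*} [Field k] (d δ : ℕ)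
    (F G : MvPolynomial (Fin 3) k)
    (hF : F.IsHomogeneous d) (hG : G.IsHomogeneous δ) :
    ∃ c : k, c ≠ 0 ∧ conchRes d δ F G = MvPolynomial.C c * conchRes δ d G F := by
  obtain ⟨v, hv, hres⟩ := exists_resultantD_comp_swap_eq_mul Polynomial.natDegree_one_sub_X_le
    Polynomial.one_sub_X_comp_one_sub_X (natDegree_conchSubB_le hF) (natDegree_conchSubC_le hG)
  rw [← conchSubB_eq_comp, ← conchSubC_eq_comp] at hres
  have hsymm : conchRes d δ F G = v * conchRes δ d G F := by
    rw [conchRes, conchRes, hres, ← mul_assoc, hv, one_mul]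
  obtain rfl | rfl := mul_self_eq_one_iff.mp hv
  · exact ⟨1, one_ne_zero, by rwa [map_one]⟩
  · exact ⟨-1, neg_ne_zero.mpr one_ne_zero, by rwa [map_neg, map_one]⟩
end

section
/- Let F = ax + by + cz and G = a'x + b'y + c'z be two linear forms over a field k. The conchoidal resultant R(F,G), i.e. the resultant in (λ,μ) of F((μ-λ)x,(μ-λ)y,μz) and G(λx,λy,μz), equals -[(ax+by+cz)(a'x+b'y+c'z) - cc'z²]. -/
/-! Both substituted forms are linear in `λ`: `F((1-λ)x,(1-λ)y,z) = F - (ax+by)λ` and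
`G(λx,λy,z) = (a'x+b'y)λ + c'z`. Their resultant is the `2 × 2` determinant
`-(ax+by)·c'z - F·(a'x+b'y)`, and `-(ax+by)c'z = cc'z² - F·c'z`. -/

open MvPolynomial

theorem resultantD_one_one {R : Type*} [CommRing R] (f g : Polynomial R) :
    resultantD 1 1 f g = f.coeff 1 * g.coeff 0 - f.coeff 0 * g.coeff 1 := by
  simp [resultantD, sylvester, Matrix.det_fin_two]

section LinearForms

variable {k : Type*} [CommRing k]

theorem conchSubB_linear (a b c : k) :
    conchSubB (C a * X 0 + C b * X 1 + C c * X 2) =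
      Polynomial.C (C a * X 0 + C b * X 1 + C c * X 2) -
        Polynomial.C (C a * X 0 + C b * X 1) * Polynomial.X := by
  simp only [conchSubB, map_add, map_mul, aeval_C, aeval_X, Polynomial.algebraMap_apply,
    algebraMap_eq, Matrix.cons_val]
  ring

theorem conchSubC_linear (a b c : k) :
    conchSubC (C a * X 0 + C b * X 1 + C c * X 2) =
      Polynomial.C (C a * X 0 + C b * X 1) * Polynomial.X + Polynomial.C (C c * X 2) := by
  simp only [conchSubC, map_add, map_mul, aeval_C, aeval_X, Polynomial.algebraMap_apply,
    algebraMap_eq, Matrix.cons_val]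
  ring

end LinearForms

/-- the conchoidal resultant of two lines
`F = ax + by + cz`, `G = a'x + b'y + c'z` equals `-[(F)(G) - cc'z²]`. -/
theorem conchRes_two_lines {k : Type*} [Field k] (a b c a' b' c' : k) :
    conchRes 1 1
        (MvPolynomial.C a * X 0 + MvPolynomial.C b * X 1 + MvPolynomial.C c * X 2)
        (MvPolynomial.C a' * X 0 + MvPolynomial.C b' * X 1 + MvPolynomial.C c' * X 2) =
      -((MvPolynomial.C a * X 0 + MvPolynomial.C b * X 1 + MvPolynomial.C c * X 2) *
          (MvPolynomial.C a' * X 0 + MvPolynomial.C b' * X 1 + MvPolynomial.C c' * X 2) -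
        (MvPolynomial.C c * MvPolynomial.C c') * (X 2 : MvPolynomial (Fin 3) k) ^ 2) := by
  rw [conchRes, resultantD_one_one, conchSubB_linear, conchSubC_linear]
  simp only [Polynomial.coeff_add, Polynomial.coeff_sub,
    Polynomial.coeff_C_zero, Polynomial.coeff_C_succ, Polynomial.coeff_C_mul,
    Polynomial.coeff_X_zero, Polynomial.coeff_X_one]
  ring
end

section
/- Let S be a discrete valuation ring with valuation v, let a ≤ b be positive integers, and let M be the 2b × b matrix over S with rows (0,…,0,g₁,…,g_{b-j}) for j = 0,…,b-1 (the g-block, b rows) stacked over rows (0,…,0,f₁,…,f_{b-j}) for j = 0,…,b-1 (the f-block, b rows), where v(f₁) = b, v(g₁) = a, v(fᵢ) ≥ b+1-i, and v(gᵢ) ≥ a+1-i for all i = 1,…,b. Then every b × b minor m of M satisfies v(m) ≥ a(b-a) + a(a+1)/2. -/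
/-!
Expand the minor over permutations. If row `i` is a `g`-row shifted by `s`, its entry in column
`c` has valuation at least `s + a - c` (truncated at `0`; entries left of the shift vanish), and
for an `f`-row the same holds with `b` in place of `a`. So a term of the expansion, which uses
distinct rows `r c` in the columns `c`, has valuation at least `∑ c, (reach (r c) - c)`. Count
this as the number of pairs `c ≤ j < reach (r c)` by the index `j < b`: of the `j + 1` columns
`c ≤ j`, only those whose row is a `g`-row shifted by at most `j - a` fail to reach past `j`, and
by injectivity there are at most `j + 1 - a` of them. Hence the term has valuation at least
`∑ j < b, min (j + 1) a = a (b - a) + a (a + 1) / 2`.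
-/

open Finset

namespace AddValuation

theorem tsub_le_map_shift {R : Type*} [Ring R] (V : AddValuation R ℕ∞) {κ n : ℕ} {g : ℕ → R}
    (hg : ∀ k, 1 ≤ k → k ≤ n → ((κ + 1 - k : ℕ) : ℕ∞) ≤ V (g k)) (s : ℕ) {c : ℕ} (hc : c < n) :
    ((s + κ - c : ℕ) : ℕ∞) ≤ V (if s ≤ c then g (c - s + 1) else 0) := by
  split_ifs with hsc
  · convert hg (c - s + 1) (by omega) (by omega) using 2
    omega
  · simp

variable {R Γ₀ : Type*} [CommRing R] [LinearOrderedAddCommMonoidWithTop Γ₀] (V : AddValuation R Γ₀)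

theorem sum_le_map_prod {ι : Type*} (s : Finset ι) {p : ι → R} {w : ι → Γ₀}
    (h : ∀ i ∈ s, w i ≤ V (p i)) : ∑ i ∈ s, w i ≤ V (∏ i ∈ s, p i) := by
  classical
  induction s using cons_induction with
  | empty => simp
  | cons i s _ ih =>
    rw [prod_cons, sum_cons, V.map_mul]
    exact add_le_add (h i (mem_cons_self i s)) (ih fun j hj => h j (mem_cons_of_mem hj))

theorem le_map_det {n : Type*} [Fintype n] [DecidableEq n] (A : Matrix n n R) {w : n → n → Γ₀}
    (hw : ∀ i j, w i j ≤ V (A i j)) {N : Γ₀} (hN : ∀ σ : Equiv.Perm n, N ≤ ∑ j, w (σ j) j) :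
    N ≤ V A.det := by
  rw [Matrix.det_apply]
  refine V.map_le_sum fun σ _ => ?_
  have hsign : V (Equiv.Perm.sign σ • ∏ j, A (σ j) j) = V (∏ j, A (σ j) j) := by
    rcases Int.units_eq_one_or (Equiv.Perm.sign σ) with h | h <;> simp [h, V.map_neg]
  rw [hsign]
  exact (hN σ).trans (V.sum_le_map_prod univ fun j _ => hw (σ j) j)

end AddValuation

/-- Both sides bound the number of pairs `(c, j)` with `c ≤ j < t c`. -/
theorem sum_succ_sub_card_le_sum_tsub {b : ℕ} (t : Fin b → ℕ) :
    ∑ j : Fin b, ((j : ℕ) + 1 - #{c | t c ≤ j}) ≤ ∑ c : Fin b, (t c - c) := by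
  have hcover (j : Fin b) :
      (j : ℕ) + 1 ≤ #{c : Fin b | c ≤ j ∧ (j : ℕ) < t c} + #{c | t c ≤ j} := by
    have hsplit :
        Iic j ⊆ univ.filter (fun c => c ≤ j ∧ (j : ℕ) < t c) ∪ univ.filter (t · ≤ j) :=
      fun c hc => by by_cases htc : t c ≤ j <;> simp_all
    exact (Fin.card_Iic j).symm.le.trans ((card_le_card hsplit).trans (card_union_le _ _))
  have hcol (c : Fin b) : #{j : Fin b | c ≤ j ∧ (j : ℕ) < t c} ≤ t c - c := by
    rw [← Nat.card_Ico]
    refine card_le_card_of_injOn Fin.val (fun j hj => ?_) Fin.val_injective.injOn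
    rw [mem_coe, mem_filter] at hj
    exact mem_Ico.mpr hj.2
  calc ∑ j : Fin b, ((j : ℕ) + 1 - #{c | t c ≤ j})
      ≤ ∑ j : Fin b, #{c : Fin b | c ≤ j ∧ (j : ℕ) < t c} :=
        sum_le_sum fun j _ => Nat.sub_le_of_le_add (hcover j)
    _ = ∑ c : Fin b, #{j : Fin b | c ≤ j ∧ (j : ℕ) < t c} := by
        simp only [card_filter]; exact sum_comm
    _ ≤ ∑ c : Fin b, (t c - c) := sum_le_sum fun c _ => hcol c

/-- Row `i < b` of the matrix is the `g`-row shifted by `i`, row `i ≥ b` the `f`-row shifted by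
`i - b`; in both cases its entry in column `c` has valuation at least `rowReach a b i - c`. -/
def rowReach (a b i : ℕ) : ℕ := if i < b then i + a else i

theorem card_rowReach_le {ι : Type*} [Fintype ι] {a b j : ℕ} (hj : j < b) {r : ι → ℕ}
    (hr : Function.Injective r) : #{c | rowReach a b (r c) ≤ j} ≤ j + 1 - a := by
  rw [← card_range (j + 1 - a)]
  refine card_le_card_of_injOn r (fun c hc => ?_) hr.injOn
  rw [mem_coe, mem_filter, rowReach] at hc
  rw [mem_coe, mem_range]
  split_ifs at hc <;> omega

theorem sum_min_succ_le_sum_rowReach_sub {a b : ℕ} {r : Fin b → ℕ} (hr : Function.Injective r) :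
    ∑ j ∈ range b, min (j + 1) a ≤ ∑ c : Fin b, (rowReach a b (r c) - c) := by
  rw [← Fin.sum_univ_eq_sum_range (fun j => min (j + 1) a)]
  refine le_trans (sum_le_sum fun j _ => ?_) (sum_succ_sub_card_le_sum_tsub _)
  have := card_rowReach_le (a := a) j.isLt hr
  omega

theorem sum_range_min_succ {a b : ℕ} (hab : a ≤ b) :
    ∑ j ∈ range b, min (j + 1) a = a * (b - a) + a * (a + 1) / 2 := by
  induction b, hab using Nat.le_induction with
  | base =>
    have hgauss : ∑ j ∈ range a, (j + 1) = a * (a + 1) / 2 := by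
      have hshift := sum_range_succ' (fun j => j) a
      rw [sum_range_id, add_zero, Nat.add_sub_cancel, Nat.mul_comm] at hshift
      exact hshift.symm
    rw [sum_congr rfl fun j hj => min_eq_left (mem_range.mp hj), hgauss, Nat.sub_self]
    simp
  | succ b hab ih =>
    rw [sum_range_succ, ih, min_eq_right (by omega), Nat.sub_add_comm hab, Nat.mul_succ]
    ring

theorem dvr_minor_valuation_general {S : Type*} [CommRing S] [IsDomain S]
    [IsDiscreteValuationRing S] (a b : ℕ) (hab : a ≤ b)
    (f g : ℕ → S)
    (v : S → ℕ∞) (hv : v = fun s => IsDiscreteValuationRing.addVal S s)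
    (M : Matrix (Fin (2 * b)) (Fin b) S)
    (hM : ∀ (i : Fin (2 * b)) (j : Fin b),
      M i j =
        if (i : ℕ) < b then
          (if (i : ℕ) ≤ (j : ℕ) then g ((j : ℕ) - (i : ℕ) + 1) else 0)
        else
          (if (i : ℕ) - b ≤ (j : ℕ) then f ((j : ℕ) - ((i : ℕ) - b) + 1) else 0))
    (hf : ∀ i, 1 ≤ i → i ≤ b → ((b + 1 - i : ℕ) : ℕ∞) ≤ v (f i))
    (hg : ∀ i, 1 ≤ i → i ≤ b → ((a + 1 - i : ℕ) : ℕ∞) ≤ v (g i)) :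
    ∀ rows : Fin b → Fin (2 * b), Function.Injective rows →
      ((a * (b - a) + a * (a + 1) / 2 : ℕ) : ℕ∞) ≤
        v ((M.submatrix rows id).det) := by
  subst hv
  dsimp only at hf hg ⊢
  set V := IsDiscreteValuationRing.addVal S
  intro rows hrows
  have hentry (i : Fin (2 * b)) (c : Fin b) :
      ((rowReach a b i - c : ℕ) : ℕ∞) ≤ V (M i c) := by
    rw [hM, rowReach]
    by_cases hi : (i : ℕ) < b
    · simpa only [if_pos hi] using V.tsub_le_map_shift hg i c.isLt
    · simpa only [if_neg hi, Nat.sub_add_cancel (not_lt.mp hi)] using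
        V.tsub_le_map_shift hf (i - b) c.isLt
  refine V.le_map_det _ (w := fun i c => ((rowReach a b (rows i) - c : ℕ) : ℕ∞))
    (fun i c => hentry (rows i) c) fun σ => ?_
  rw [← sum_range_min_succ hab, ← Nat.cast_sum, Nat.cast_le]
  exact sum_min_succ_le_sum_rowReach_sub (Fin.val_injective.comp (hrows.comp σ.injective))

/-- the valuation-theoretic lemma on minors.  `S` is a discrete
valuation ring with additive valuation `v` (with `v 0 = ⊤`).  `M` is the
`2b × b` matrix whose first `b` rows shift the sequence `g 1, …, g b` and whose
last `b` rows shift the sequence `f 1, …, f b`.  If `v (f 1) = b`, `v (g 1) = a`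
and `v (f i) ≥ b + 1 - i`, `v (g i) ≥ a + 1 - i` for `1 ≤ i ≤ b`, then every
`b × b` minor `m` of `M` satisfies `v m ≥ a(b-a) + a(a+1)/2`. -/
theorem dvr_minor_valuation {S : Type*} [CommRing S] [IsDomain S]
    [IsDiscreteValuationRing S] (a b : ℕ) (ha : 0 < a) (hab : a ≤ b)
    (f g : ℕ → S)
    (v : S → ℕ∞) (hv : v = fun s => IsDiscreteValuationRing.addVal S s)
    (M : Matrix (Fin (2 * b)) (Fin b) S)
    (hM : ∀ (i : Fin (2 * b)) (j : Fin b),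
      M i j =
        if (i : ℕ) < b then
          (if (i : ℕ) ≤ (j : ℕ) then g ((j : ℕ) - (i : ℕ) + 1) else 0)
        else
          (if (i : ℕ) - b ≤ (j : ℕ) then f ((j : ℕ) - ((i : ℕ) - b) + 1) else 0))
    (hf1 : v (f 1) = (b : ℕ∞)) (hg1 : v (g 1) = (a : ℕ∞))
    (hf : ∀ i, 1 ≤ i → i ≤ b → ((b + 1 - i : ℕ) : ℕ∞) ≤ v (f i))
    (hg : ∀ i, 1 ≤ i → i ≤ b → ((a + 1 - i : ℕ) : ℕ∞) ≤ v (g i)) :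
    ∀ rows : Fin b → Fin (2 * b), Function.Injective rows →
      ((a * (b - a) + a * (a + 1) / 2 : ℕ) : ℕ∞) ≤
        v ((M.submatrix rows id).det) :=
  dvr_minor_valuation_general a b hab f g v hv M hM hf hg
end

section
/- Let F ∈ k[x,y,z] be homogeneous of degree d with F(0,0,1) ≠ 0 (the curve B: F=0 does not pass through A=[0:0:1]). Then the affine incidence surface W^{(a)} = {(x,y,X,Y) ∈ k⁴ : F(X-x, Y-y, 1) = 0 and xY - yX = 0} is isomorphic, as an algebraic variety, to B^{(a)} × 𝔸¹, where B^{(a)} = {(u,v) ∈ k² : F(u,v,1) = 0}. Explicitly, the map (u,v,λ) ↦ (λu, λv, (λ+1)u, (λ+1)v) is an isomorphism from B^{(a)} × 𝔸¹ to W^{(a)}. -/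
/-! A point `(a, b)` of `W⁽ᵃ⁾` determines `p = b - a ∈ B⁽ᵃ⁾`, which is nonzero because `B` misses
`[0:0:1]`. The second equation says that `a` is collinear with `p`, so `a = λ • p` for a unique
`λ`, and `(p, λ)` is the unique preimage of `(a, b)`. -/

open MvPolynomial

section

variable {k : Type*} [Field k]

lemma affine_point_ne_zero_of_eval_eq_zero {F : MvPolynomial (Fin 3) k}
    (hA : eval (![0, 0, 1] : Fin 3 → k) F ≠ 0) {u v : k}
    (h : eval (![u, v, 1] : Fin 3 → k) F = 0) : (u, v) ≠ 0 := by
  rintro ⟨rfl, rfl⟩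
  exact hA h

lemma Prod.exists_smul_eq_of_mul_eq_mul {a p : k × k} (hp : p ≠ 0)
    (h : a.1 * p.2 = a.2 * p.1) : ∃ c : k, c • p = a := by
  obtain ⟨p₁, p₂⟩ := p
  obtain ⟨a₁, a₂⟩ := a
  by_cases h₁ : p₁ = 0
  · have h₂ : p₂ ≠ 0 := fun h₂ => hp (by rw [h₁, h₂]; rfl)
    refine ⟨a₂ / p₂, Prod.ext ?_ ?_⟩
    · have ha₁ : a₁ = 0 := by simpa [h₁, h₂] using h
      simp [h₁, ha₁]
    · simp [h₂]
  · refine ⟨a₁ / p₁, Prod.ext ?_ ?_⟩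
    · simp [h₁]
    · simp only [smul_eq_mul, Prod.smul_mk]
      field_simp
      linear_combination h

end

theorem incidence_surface_product_general {k : Type*} [Field k]
    (F : MvPolynomial (Fin 3) k)
    (hA : MvPolynomial.eval (![0, 0, 1] : Fin 3 → k) F ≠ 0) :
    Set.BijOn
      (fun p : (k × k) × k =>
        ((p.2 * p.1.1, p.2 * p.1.2), ((p.2 + 1) * p.1.1, (p.2 + 1) * p.1.2)))
      ({uv : k × k | MvPolynomial.eval (![uv.1, uv.2, 1] : Fin 3 → k) F = 0} ×ˢ
        (Set.univ : Set k))
      {w : (k × k) × (k × k) |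
        MvPolynomial.eval (![w.2.1 - w.1.1, w.2.2 - w.1.2, 1] : Fin 3 → k) F = 0 ∧
        w.1.1 * w.2.2 - w.1.2 * w.2.1 = 0} := by
  refine ⟨?_, ?_, ?_⟩
  · rintro ⟨⟨u, v⟩, c⟩ ⟨hB, -⟩
    refine ⟨?_, by ring⟩
    show eval ![(c + 1) * u - c * u, (c + 1) * v - c * v, 1] F = 0
    rwa [add_one_mul, add_one_mul, add_sub_cancel_left, add_sub_cancel_left]
  · rintro ⟨⟨u, v⟩, c⟩ ⟨hB, -⟩ ⟨⟨u', v'⟩, c'⟩ - heq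
    simp only [Prod.mk.injEq] at heq
    obtain ⟨⟨hu, hv⟩, hu', hv'⟩ := heq
    obtain rfl : u = u' := by linear_combination hu' - hu
    obtain rfl : v = v' := by linear_combination hv' - hv
    have hc : c • (u, v) = c' • (u, v) := by simp [hu, hv]
    rw [smul_left_injective k (affine_point_ne_zero_of_eval_eq_zero hA hB) hc]
  · rintro ⟨⟨x, y⟩, ⟨X, Y⟩⟩ ⟨hW, hline⟩
    obtain ⟨c, hc⟩ := Prod.exists_smul_eq_of_mul_eq_mul (a := (x, y))
      (affine_point_ne_zero_of_eval_eq_zero hA hW) (by linear_combination hline)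
    simp only [Prod.smul_mk, smul_eq_mul, Prod.mk.injEq] at hc
    refine ⟨((X - x, Y - y), c), ⟨hW, Set.mem_univ c⟩, ?_⟩
    simp only [Prod.mk.injEq]
    exact ⟨hc, by linear_combination hc.1, by linear_combination hc.2⟩

/-- if the curve `B : F = 0` does not pass through `A = [0:0:1]`,
the affine incidence surface
`W⁽ᵃ⁾ = {(x,y,X,Y) : F(X-x, Y-y, 1) = 0, xY - yX = 0}` is isomorphic to
`B⁽ᵃ⁾ × 𝔸¹`, via the explicit map `((u,v), λ) ↦ (λu, λv, (λ+1)u, (λ+1)v)`,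
which is a bijection from `B⁽ᵃ⁾ × 𝔸¹` onto `W⁽ᵃ⁾`. -/
theorem incidence_surface_product {k : Type*} [Field k] (d : ℕ)
    (F : MvPolynomial (Fin 3) k) (hF : F.IsHomogeneous d)
    (hA : MvPolynomial.eval (![0, 0, 1] : Fin 3 → k) F ≠ 0) :
    Set.BijOn
      (fun p : (k × k) × k =>
        ((p.2 * p.1.1, p.2 * p.1.2), ((p.2 + 1) * p.1.1, (p.2 + 1) * p.1.2)))
      ({uv : k × k | MvPolynomial.eval (![uv.1, uv.2, 1] : Fin 3 → k) F = 0} ×ˢ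
        (Set.univ : Set k))
      {w : (k × k) × (k × k) |
        MvPolynomial.eval (![w.2.1 - w.1.1, w.2.2 - w.1.2, 1] : Fin 3 → k) F = 0 ∧
        w.1.1 * w.2.2 - w.1.2 * w.2.1 = 0} :=
  incidence_surface_product_general F hA
end

section
/- Let F ∈ k[x,y,z] be homogeneous of degree d ≥ 1, defining a smooth plane curve B not through A = [0:0:1], with char k = 0 or char k > d. Let W_B ⊂ ℙ²×ℙ² be defined by F(zX - xZ, zY - yZ, zZ) = 0 and xY - yX = 0. Then every point of W_B with z ≠ 0, Z = 0 (or z = 0, Z ≠ 0) is a smooth point of W_B, i.e., the Jacobian matrix of the two defining equations has rank 2 there. -/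
/-!
Write `P₁ = F ∘ φ` with `φ(x,y,z,X,Y,Z) = (zX - xZ, zY - yZ, zZ)`. By the chain rule the first
row of the Jacobian is `∇F(φ p) · Dφ(p)`. When exactly one of `z, Z` vanishes, `φ p` is a nonzero
multiple of `(X,Y,0)` (if `Z = 0`) or of `(x,y,0)` (if `z = 0`); it lies on `B`, so `∇F(φ p) ≠ 0`
by smoothness. The two rows are then visibly independent: the first row vanishes in the
`x, y`-columns (resp. the `X, Y`-columns), where the row `(Y, -X, 0, -y, x, 0)` of `∇(xY - yX)`
does not, and `∇F(φ p) ≠ 0` makes the first row nonzero in the remaining columns.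
-/

open MvPolynomial

theorem Derivation.map_mvPolynomial_aeval {R σ A M : Type*} [CommSemiring R] [Fintype σ]
    [CommSemiring A] [Algebra R A] [AddCommMonoid M] [Module A M] [Module R M]
    [IsScalarTower R A M] (D : Derivation R A M) (s : σ → A) (F : MvPolynomial σ R) :
    D (aeval s F) = ∑ i, aeval s (pderiv i F) • D (s i) := by
  classical
  induction F using MvPolynomial.induction_on with
  | C a => simp
  | add F G hF hG => simp only [map_add, hF, hG, add_smul, Finset.sum_add_distrib]
  | mul_X F i hF =>
    simp [Derivation.leibniz, hF, Finset.smul_sum, add_smul, Finset.sum_add_distrib,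
      Pi.single_apply, mul_smul, smul_comm (s i), apply_ite (aeval s), ite_smul]

theorem MvPolynomial.eval_aeval {R σ τ : Type*} [CommSemiring R] (p : τ → R)
    (s : σ → MvPolynomial τ R) (F : MvPolynomial σ R) :
    eval p (aeval s F) = eval (fun i => eval p (s i)) F := by
  rw [aeval_def, algebraMap_eq]
  exact (eval_assoc s p F).symm

theorem MvPolynomial.eval_pderiv_aeval {R σ τ : Type*} [CommSemiring R] [Fintype σ]
    (p : τ → R) (s : σ → MvPolynomial τ R) (F : MvPolynomial σ R) (j : τ) :
    eval p (pderiv j (aeval s F)) =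
      ∑ i, eval (fun i => eval p (s i)) (pderiv i F) * eval p (pderiv j (s i)) := by
  simp only [Derivation.map_mvPolynomial_aeval, map_sum, smul_eq_mul, map_mul, eval_aeval]

theorem Matrix.rank_eq_two_of_echelon {K n : Type*} [Field K] [Fintype n]
    (M : Matrix (Fin 2) n K) {a b : n} (ha₀ : M 0 a = 0) (ha₁ : M 1 a ≠ 0) (hb : M 0 b ≠ 0) : M.rank = 2 := by
  have hrows : LinearIndependent K M.row := by
    rw [show M.row = ![M 0, M 1] from funext fun i => by fin_cases i <;> rfl,
      LinearIndependent.pair_iff]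
    intro s t hst
    have ht : t = 0 := by simpa [ha₀, ha₁] using congrFun hst a
    exact ⟨by simpa [ht, hb] using congrFun hst b, ht⟩
  simpa using hrows.rank_matrix

section WB

variable {k : Type*} [Field k]

def wbPoint (p : Fin 6 → k) : Fin 3 → k :=
  ![p 2 * p 3 - p 0 * p 5, p 2 * p 4 - p 1 * p 5, p 2 * p 5]

/-- The Jacobian of `(P₁, P₂)` at `p = (x,y,z,X,Y,Z)`, with `g` standing for `∇F(wbPoint p)`. -/
def wbJacobian (p : Fin 6 → k) (g : Fin 3 → k) : Matrix (Fin 2) (Fin 6) k :=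
  !![-(p 5) * g 0, -(p 5) * g 1, p 3 * g 0 + p 4 * g 1 + p 5 * g 2, p 2 * g 0, p 2 * g 1,
      -(p 0) * g 0 - p 1 * g 1 + p 2 * g 2;
    p 4, -(p 3), 0, -(p 1), p 0, 0]

theorem eval_subst_eq_wbPoint (p : Fin 6 → k) :
    (fun i => eval p (![X 2 * X 3 - X 0 * X 5, X 2 * X 4 - X 1 * X 5, X 2 * X 5] i)) =
      wbPoint p := by
  funext i
  fin_cases i <;> simp [wbPoint]

theorem jacobian_eq_wbJacobian (p : Fin 6 → k) (F : MvPolynomial (Fin 3) k) :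
    Matrix.of ![fun j => eval p (pderiv j
        (aeval ![X 2 * X 3 - X 0 * X 5, X 2 * X 4 - X 1 * X 5, X 2 * X 5] F)),
      fun j => eval p (pderiv j (X 0 * X 4 - X 1 * X 3))] =
      wbJacobian p (fun i => eval (wbPoint p) (pderiv i F)) := by
  ext r j
  fin_cases r
  · simp only [Matrix.of_apply, eval_pderiv_aeval, eval_subst_eq_wbPoint]
    fin_cases j <;> simp [wbJacobian, Fin.sum_univ_three, pderiv_X, Pi.single_apply] <;> ring
  · fin_cases j <;> simp [wbJacobian, pderiv_X, Pi.single_apply]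

variable {p : Fin 6 → k}

theorem wbPoint_ne_zero_of_Z_eq_zero (hz : p 2 ≠ 0) (hZ : p 5 = 0)
    (hXY : ¬(p 3 = 0 ∧ p 4 = 0)) : wbPoint p ≠ 0 := by
  intro h
  exact hXY ⟨by simpa [wbPoint, hz, hZ] using congrFun h 0,
    by simpa [wbPoint, hz, hZ] using congrFun h 1⟩

theorem wbPoint_ne_zero_of_z_eq_zero (hz : p 2 = 0) (hZ : p 5 ≠ 0)
    (hxy : ¬(p 0 = 0 ∧ p 1 = 0)) : wbPoint p ≠ 0 := by
  intro h
  exact hxy ⟨by simpa [wbPoint, hz, hZ] using congrFun h 0,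
    by simpa [wbPoint, hz, hZ] using congrFun h 1⟩

theorem rank_wbJacobian_of_Z_eq_zero {g : Fin 3 → k} (hg : g ≠ 0) (hz : p 2 ≠ 0)
    (hZ : p 5 = 0) (hXY : ¬(p 3 = 0 ∧ p 4 = 0)) : (wbJacobian p g).rank = 2 := by
  obtain ⟨a, ha₀, ha₁⟩ : ∃ a, wbJacobian p g 0 a = 0 ∧ wbJacobian p g 1 a ≠ 0 := by
    rcases not_and_or.1 hXY with hX | hY
    · exact ⟨1, by simp [wbJacobian, hZ], by simpa [wbJacobian] using hX⟩
    · exact ⟨0, by simp [wbJacobian, hZ], by simpa [wbJacobian] using hY⟩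
  obtain ⟨b, hb⟩ : ∃ b, wbJacobian p g 0 b ≠ 0 := by
    by_contra! h
    have hg0 : g 0 = 0 := by simpa [wbJacobian, hz] using h 3
    have hg1 : g 1 = 0 := by simpa [wbJacobian, hz] using h 4
    have hg2 : g 2 = 0 := by simpa [wbJacobian, hz, hg0, hg1] using h 5
    exact hg (funext fun i => by fin_cases i <;> assumption)
  exact Matrix.rank_eq_two_of_echelon _ ha₀ ha₁ hb

theorem rank_wbJacobian_of_z_eq_zero {g : Fin 3 → k} (hg : g ≠ 0) (hz : p 2 = 0)
    (hZ : p 5 ≠ 0) (hxy : ¬(p 0 = 0 ∧ p 1 = 0)) : (wbJacobian p g).rank = 2 := by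
  obtain ⟨a, ha₀, ha₁⟩ : ∃ a, wbJacobian p g 0 a = 0 ∧ wbJacobian p g 1 a ≠ 0 := by
    rcases not_and_or.1 hxy with hx | hy
    · exact ⟨4, by simp [wbJacobian, hz], by simpa [wbJacobian] using hx⟩
    · exact ⟨3, by simp [wbJacobian, hz], by simpa [wbJacobian] using hy⟩
  obtain ⟨b, hb⟩ : ∃ b, wbJacobian p g 0 b ≠ 0 := by
    by_contra! h
    have hg0 : g 0 = 0 := by simpa [wbJacobian, hZ] using h 0
    have hg1 : g 1 = 0 := by simpa [wbJacobian, hZ] using h 1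
    have hg2 : g 2 = 0 := by simpa [wbJacobian, hZ, hg0, hg1] using h 2
    exact hg (funext fun i => by fin_cases i <;> assumption)
  exact Matrix.rank_eq_two_of_echelon _ ha₀ ha₁ hb

end WB

theorem WB_smooth_at_infinity_mixed_general {k : Type*} [Field k]
    (F : MvPolynomial (Fin 3) k)
    (hsmooth : ∀ q : Fin 3 → k, q ≠ 0 → MvPolynomial.eval q F = 0 →
      ∃ i : Fin 3, MvPolynomial.eval q (pderiv i F) ≠ 0)
    (P₁ P₂ : MvPolynomial (Fin 6) k)
    (hP₁ : P₁ = MvPolynomial.aeval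
      (![X 2 * X 3 - X 0 * X 5, X 2 * X 4 - X 1 * X 5, X 2 * X 5] :
        Fin 3 → MvPolynomial (Fin 6) k) F)
    (hP₂ : P₂ = X 0 * X 4 - X 1 * X 3)
    (p : Fin 6 → k)
    (hp1 : ¬ (p 0 = 0 ∧ p 1 = 0 ∧ p 2 = 0))
    (hp2 : ¬ (p 3 = 0 ∧ p 4 = 0 ∧ p 5 = 0))
    (hmixed : (p 2 ≠ 0 ∧ p 5 = 0) ∨ (p 2 = 0 ∧ p 5 ≠ 0))
    (hW1 : MvPolynomial.eval p P₁ = 0) :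
    (Matrix.of
      (![fun j => MvPolynomial.eval p (pderiv j P₁),
         fun j => MvPolynomial.eval p (pderiv j P₂)] :
        Fin 2 → Fin 6 → k)).rank = 2 := by
  subst hP₁ hP₂
  rw [eval_aeval, eval_subst_eq_wbPoint] at hW1
  have hgrad : wbPoint p ≠ 0 → (fun i => eval (wbPoint p) (pderiv i F)) ≠ 0 := fun hq hg => by
    obtain ⟨i, hi⟩ := hsmooth _ hq hW1
    exact hi (congrFun hg i)
  rw [jacobian_eq_wbJacobian]
  rcases hmixed with ⟨hz, hZ⟩ | ⟨hz, hZ⟩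
  · have hXY : ¬(p 3 = 0 ∧ p 4 = 0) := fun h => hp2 ⟨h.1, h.2, hZ⟩
    exact rank_wbJacobian_of_Z_eq_zero (hgrad (wbPoint_ne_zero_of_Z_eq_zero hz hZ hXY)) hz hZ hXY
  · have hxy : ¬(p 0 = 0 ∧ p 1 = 0) := fun h => hp1 ⟨h.1, h.2, hz⟩
    exact rank_wbJacobian_of_z_eq_zero (hgrad (wbPoint_ne_zero_of_z_eq_zero hz hZ hxy)) hz hZ hxy

/-- smoothness of `W_B` at points with `z ≠ 0, Z = 0` (or
`z = 0, Z ≠ 0`).  In the bihomogeneous coordinates `(x,y,z,X,Y,Z)` (variables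
`0,…,5`), `W_B` is defined by `P₁ = F(zX - xZ, zY - yZ, zZ)` and
`P₂ = xY - yX`.  If `B : F = 0` is smooth of degree `d ≥ 1`, does not pass
through `A = [0:0:1]`, and `char k = 0` or `char k > d`, then the Jacobian
matrix of `(P₁, P₂)` has rank `2` at every such point of `W_B`. -/
theorem WB_smooth_at_infinity_mixed {k : Type*} [Field k] (d : ℕ) (hd : 1 ≤ d)
    (F : MvPolynomial (Fin 3) k) (hF : F.IsHomogeneous d)
    (hchar : ringChar k = 0 ∨ d < ringChar k)
    (hsmooth : ∀ q : Fin 3 → k, q ≠ 0 → MvPolynomial.eval q F = 0 →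
      ∃ i : Fin 3, MvPolynomial.eval q (pderiv i F) ≠ 0)
    (hA : MvPolynomial.eval (![0, 0, 1] : Fin 3 → k) F ≠ 0)
    (P₁ P₂ : MvPolynomial (Fin 6) k)
    (hP₁ : P₁ = MvPolynomial.aeval
      (![X 2 * X 3 - X 0 * X 5, X 2 * X 4 - X 1 * X 5, X 2 * X 5] :
        Fin 3 → MvPolynomial (Fin 6) k) F)
    (hP₂ : P₂ = X 0 * X 4 - X 1 * X 3)
    (p : Fin 6 → k)
    (hp1 : ¬ (p 0 = 0 ∧ p 1 = 0 ∧ p 2 = 0))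
    (hp2 : ¬ (p 3 = 0 ∧ p 4 = 0 ∧ p 5 = 0))
    (hmixed : (p 2 ≠ 0 ∧ p 5 = 0) ∨ (p 2 = 0 ∧ p 5 ≠ 0))
    (hW1 : MvPolynomial.eval p P₁ = 0) (hW2 : MvPolynomial.eval p P₂ = 0) :
    (Matrix.of
      (![fun j => MvPolynomial.eval p (pderiv j P₁),
         fun j => MvPolynomial.eval p (pderiv j P₂)] :
        Fin 2 → Fin 6 → k)).rank = 2 :=
  WB_smooth_at_infinity_mixed_general F hsmooth P₁ P₂ hP₁ hP₂ p hp1 hp2 hmixed hW1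
end

section
/- Let F ∈ k[x,y,z] be homogeneous of degree d ≥ 2, defining a curve B, and let W_B ⊂ ℙ²×ℙ² be defined by F(zX - xZ, zY - yZ, zZ) = 0 and xY - yX = 0. Then every point of the form [a:b:0; a:b:0] (with (a,b) ≠ (0,0)) on W_B is a singular point of W_B of multiplicity at least d. -/
/-!
Every entry of `![zX - xZ, zY - yZ, zZ]` vanishes at `p = (a, b, 0, a, b, 0)`, so by homogeneity
of `F` the first equation `F(zX - xZ, zY - yZ, zZ)` lies in `I ^ d`, where `I` is the kernel of
evaluation at `p`. A derivation maps `I ^ (n + 1)` into `I ^ n`, so a derivative of order `< d`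
still lies in `I`, i.e. vanishes at `p`.
-/

open MvPolynomial

theorem Derivation.map_mem_pow_of_mem_pow_succ {R A : Type*} [CommSemiring R] [CommSemiring A]
    [Algebra R A] (D : Derivation R A A) (I : Ideal A) {n : ℕ} {x : A}
    (hx : x ∈ I ^ (n + 1)) : D x ∈ I ^ n := by
  induction n generalizing x with
  | zero => simp
  | succ m ih =>
    rw [pow_succ] at hx
    refine Submodule.mul_induction_on hx (fun y hy z hz => ?_) (fun y z hy hz => ?_)
    · rw [D.leibniz, smul_eq_mul, smul_eq_mul]
      refine Ideal.add_mem _ (Ideal.mul_mem_right _ _ hy) ?_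
      rw [mul_comm, pow_succ]
      exact Ideal.mul_mem_mul (ih hy) hz
    · rw [map_add]
      exact Ideal.add_mem _ hy hz

theorem MvPolynomial.foldr_pderiv_mem_pow {R σ : Type*} [CommSemiring R]
    (I : Ideal (MvPolynomial σ R)) (L : List σ) {n : ℕ} {p : MvPolynomial σ R}
    (hp : p ∈ I ^ (L.length + n)) : L.foldr (fun i q => pderiv i q) p ∈ I ^ n := by
  induction L generalizing n with
  | nil => simpa using hp
  | cons i t ih =>
    refine (pderiv i).map_mem_pow_of_mem_pow_succ I (ih ?_)
    rwa [List.length_cons, add_right_comm, add_assoc] at hp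

theorem MvPolynomial.eval_foldr_pderiv_eq_zero_of_mem_pow_ker {R σ : Type*} [CommSemiring R]
    (x : σ → R) {d : ℕ} {p : MvPolynomial σ R} (hp : p ∈ RingHom.ker (eval x) ^ d)
    (L : List σ) (hL : L.length < d) : eval x (L.foldr (fun i q => pderiv i q) p) = 0 := by
  rw [← Nat.add_sub_cancel' hL.le] at hp
  exact Ideal.pow_le_self (by omega) (foldr_pderiv_mem_pow _ L hp)

theorem MvPolynomial.aeval_mem_span_range_pow_of_isHomogeneous {ι R S : Type*} [CommSemiring R]
    [CommSemiring S] [Algebra R S] {F : MvPolynomial ι R} {n : ℕ} (hF : F.IsHomogeneous n)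
    (g : ι → S) : aeval g F ∈ Ideal.span (Set.range g) ^ n := by
  rw [Ideal.span_pow_eq_map_homogeneousSubmodule]
  exact ⟨map (algebraMap R S) F, hF.map _, by simp [aeval_def]⟩

theorem WB_singular_on_diagonal_at_infinity_general {k : Type*} [Field k] (d : ℕ)
    (F : MvPolynomial (Fin 3) k) (hF : F.IsHomogeneous d)
    (P₁ P₂ : MvPolynomial (Fin 6) k)
    (hP₁ : P₁ = MvPolynomial.aeval
      (![X 2 * X 3 - X 0 * X 5, X 2 * X 4 - X 1 * X 5, X 2 * X 5] :
        Fin 3 → MvPolynomial (Fin 6) k) F)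
    (hP₂ : P₂ = X 0 * X 4 - X 1 * X 3)
    (a b : k) :
    MvPolynomial.eval (![a, b, 0, a, b, 0] : Fin 6 → k) P₂ = 0 ∧
    ∀ L : List (Fin 6), L.length < d →
      MvPolynomial.eval (![a, b, 0, a, b, 0] : Fin 6 → k)
        (L.foldr (fun i q => pderiv i q) P₁) = 0 := by
  refine ⟨by simp [hP₂, mul_comm], eval_foldr_pderiv_eq_zero_of_mem_pow_ker _ ?_⟩
  have h_span_le_ker : Ideal.span (Set.range
      (![X 2 * X 3 - X 0 * X 5, X 2 * X 4 - X 1 * X 5, X 2 * X 5] :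
        Fin 3 → MvPolynomial (Fin 6) k)) ≤ RingHom.ker (eval ![a, b, 0, a, b, 0]) :=
    Ideal.span_le.2 <| Set.range_subset_iff.2 fun i => by fin_cases i <;> simp
  exact Ideal.pow_right_mono h_span_le_ker d (hP₁ ▸ aeval_mem_span_range_pow_of_isHomogeneous hF _)

/-- points `[a:b:0; a:b:0]` (with `(a,b) ≠ (0,0)`) lie on `W_B`
and are singular of multiplicity at least `d ≥ 2`: all partial derivatives of
the first defining equation `P₁ = F(zX - xZ, zY - yZ, zZ)` of order at most
`d - 1` (i.e. of order `< d`) vanish there, and the second equation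
`P₂ = xY - yX` vanishes there as well. -/
theorem WB_singular_on_diagonal_at_infinity {k : Type*} [Field k] (d : ℕ)
    (hd : 2 ≤ d) (F : MvPolynomial (Fin 3) k) (hF : F.IsHomogeneous d)
    (P₁ P₂ : MvPolynomial (Fin 6) k)
    (hP₁ : P₁ = MvPolynomial.aeval
      (![X 2 * X 3 - X 0 * X 5, X 2 * X 4 - X 1 * X 5, X 2 * X 5] :
        Fin 3 → MvPolynomial (Fin 6) k) F)
    (hP₂ : P₂ = X 0 * X 4 - X 1 * X 3)
    (a b : k) (hab : ¬ (a = 0 ∧ b = 0)) :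
    MvPolynomial.eval (![a, b, 0, a, b, 0] : Fin 6 → k) P₂ = 0 ∧
    ∀ L : List (Fin 6), L.length < d →
      MvPolynomial.eval (![a, b, 0, a, b, 0] : Fin 6 → k)
        (L.foldr (fun i q => pderiv i q) P₁) = 0 :=
  WB_singular_on_diagonal_at_infinity_general d F hF P₁ P₂ hP₁ hP₂ a b
end

section
/- Let B ⊂ ℙ² be a smooth curve of degree d defined by F = 0, not through A = [0:0:1], and let W_B ⊂ ℙ²×ℙ² be defined by F(zX-xZ, zY-yZ, zZ) = 0, xY - yX = 0, with π₁ the first projection. If P = [a:b:0] is a point of the line at infinity with F(a,b,0) ≠ 0, then π₁⁻¹(P) consists of the single point [a:b:0; a:b:0]. -/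
open MvPolynomial

lemma MvPolynomial.IsHomogeneous.eval_smul {R σ : Type*} [CommSemiring R] {n : ℕ}
    {F : MvPolynomial σ R} (hF : F.IsHomogeneous n) (c : R) (x : σ → R) :
    eval (c • x) F = c ^ n * eval x F := by
  classical
  rw [eval_eq, eval_eq, Finset.mul_sum]
  refine Finset.sum_congr rfl fun m hm => ?_
  have hdeg : ∑ i ∈ m.support, m i = n := by
    simpa [Finsupp.weight_apply, Finsupp.sum] using hF (mem_support_iff.mp hm)
  simp only [Pi.smul_apply, smul_eq_mul, mul_pow, Finset.prod_mul_distrib,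
    Finset.prod_pow_eq_pow_sum, hdeg]
  ring

lemma exists_eq_mul_of_mul_sub_mul_eq_zero {k : Type*} [Field k] {a b X Y : k}
    (hab : a ≠ 0 ∨ b ≠ 0) (h : a * Y - b * X = 0) : ∃ t, X = t * a ∧ Y = t * b := by
  rcases hab with ha | hb
  · exact ⟨X / a, by field_simp, by field_simp; linear_combination h⟩
  · exact ⟨Y / b, by field_simp; linear_combination -h, by field_simp⟩

theorem WB_fiber_at_infinity_not_on_B_general {k : Type*} [Field k] (d : ℕ)
    (F : MvPolynomial (Fin 3) k) (hF : F.IsHomogeneous d)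
    (a b : k)
    (hP : MvPolynomial.eval (![a, b, 0] : Fin 3 → k) F ≠ 0) :
    ∀ X' Y' Z' : k, ¬ (X' = 0 ∧ Y' = 0 ∧ Z' = 0) →
      MvPolynomial.eval
        (![0 * X' - a * Z', 0 * Y' - b * Z', 0 * Z'] : Fin 3 → k) F = 0 →
      a * Y' - b * X' = 0 →
      ∃ t : k, t ≠ 0 ∧ X' = t * a ∧ Y' = t * b ∧ Z' = 0 := by
  intro X Y Z hXYZ heval hline
  have hZ : Z = 0 := by
    have hpt : (![0 * X - a * Z, 0 * Y - b * Z, 0 * Z] : Fin 3 → k) = (-Z) • ![a, b, 0] := by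
      ext i; fin_cases i <;> simp [mul_comm]
    rw [hpt, hF.eval_smul] at heval
    exact neg_eq_zero.mp (eq_zero_of_pow_eq_zero ((mul_eq_zero.mp heval).resolve_right hP))
  subst hZ
  have hab : a ≠ 0 ∨ b ≠ 0 := by
    by_contra! hab
    obtain ⟨rfl, rfl⟩ := hab
    exact hP (by simpa using heval)
  obtain ⟨t, rfl, rfl⟩ := exists_eq_mul_of_mul_sub_mul_eq_zero hab hline
  refine ⟨t, ?_, rfl, rfl, rfl⟩
  rintro rfl
  simp at hXYZ

/-- if `P = [a:b:0]` is a point at infinity with `F(a,b,0) ≠ 0`,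
then the fiber `π₁⁻¹(P)` of `W_B` over `P` is the single point
`[a:b:0; a:b:0]`: any `[X:Y:Z]` with `([a:b:0],[X:Y:Z]) ∈ W_B` is a nonzero
scalar multiple of `(a, b, 0)`. -/
theorem WB_fiber_at_infinity_not_on_B {k : Type*} [Field k] (d : ℕ)
    (F : MvPolynomial (Fin 3) k) (hF : F.IsHomogeneous d)
    (a b : k) (hab : ¬ (a = 0 ∧ b = 0))
    (hP : MvPolynomial.eval (![a, b, 0] : Fin 3 → k) F ≠ 0) :
    ∀ X' Y' Z' : k, ¬ (X' = 0 ∧ Y' = 0 ∧ Z' = 0) →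
      MvPolynomial.eval
        (![0 * X' - a * Z', 0 * Y' - b * Z', 0 * Z'] : Fin 3 → k) F = 0 →
      a * Y' - b * X' = 0 →
      ∃ t : k, t ≠ 0 ∧ X' = t * a ∧ Y' = t * b ∧ Z' = 0 :=
  WB_fiber_at_infinity_not_on_B_general d F hF a b hP
end
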